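/- arXiv:1606.08135 — 3 statements merged into one kernel-verified Lean document; each statement's English description precedes it below -/
import Mathlib

section
/- Let z ∈ ℂⁿ with ‖z‖ = 1, let x̃₀ ∈ ℂⁿ be a unit vector with |x̃₀* z|² ≥ 1 − θ, and let λ > 0 satisfy |λ² − 1| ≤ θ, where 0 < θ ≤ 1. Set x₀ = λ x̃₀. Then dist(x₀, z)² := min over φ ∈ [0, 2π) of ‖z − e^{iφ} x₀‖² satisfies dist(x₀, z)² ≤ 3θ. -/
/-!
Choosing the phase `φ = arg ⟪x₀, z⟫` makes `⟪z, e^{iφ} x₀⟫` real and equal to `|⟪x₀, z⟫|`, so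
`‖z - e^{iφ} x₀‖² = ‖z‖² + λ² - 2 |λ| |x̃₀* z|`. Both `λ²` and `|x̃₀* z|²` are at least `1 - θ`,
hence `|λ| |x̃₀* z| ≥ 1 - θ`, and with `λ² ≤ 1 + θ` this gives the bound `3θ`.
-/

open Complex ComplexConjugate

lemma Complex.exp_arg_mul_I_mul_conj (a : ℂ) : exp (arg a * I) * conj a = ‖a‖ := by
  conv_lhs => rw [← norm_mul_exp_arg_mul_I a]
  rw [map_mul, ← exp_conj, conj_ofReal, map_mul, conj_ofReal, conj_I, mul_left_comm, ← exp_add]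
  simp

lemma Complex.exists_mem_Ico_exp_mul_I_eq_exp_arg_mul_I (a : ℂ) :
    ∃ φ ∈ Set.Ico (0 : ℝ) (2 * Real.pi), exp (φ * I) = exp (arg a * I) :=
  ⟨toIcoMod Real.two_pi_pos 0 (arg a), toIcoMod_mem_Ico' _ _, by
    rw [toIcoMod, ofReal_sub, ofReal_zsmul, ofReal_mul, ofReal_ofNat]
    exact exp_mul_I_periodic.sub_zsmul_eq _⟩

lemma exists_phase_norm_sub_smul_sq_eq {E : Type*} [NormedAddCommGroup E] [InnerProductSpace ℂ E]
    (x z : E) : ∃ φ ∈ Set.Ico (0 : ℝ) (2 * Real.pi),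
      ‖z - exp (φ * I) • x‖ ^ 2 = ‖z‖ ^ 2 + ‖x‖ ^ 2 - 2 * ‖inner ℂ x z‖ := by
  obtain ⟨φ, hφ, hexp⟩ := exists_mem_Ico_exp_mul_I_eq_exp_arg_mul_I (inner ℂ x z)
  refine ⟨φ, hφ, ?_⟩
  have hinner : inner ℂ z (exp (φ * I) • x) = ‖inner ℂ x z‖ := by
    rw [inner_smul_right, ← inner_conj_symm (𝕜 := ℂ) z x, hexp, exp_arg_mul_I_mul_conj]
  rw [norm_sub_sq (𝕜 := ℂ), hinner, norm_smul, norm_exp_ofReal_mul_I, RCLike.re_to_complex,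
    ofReal_re]
  ring

lemma one_add_sq_sub_two_mul_le_three_mul {θ r s : ℝ} (hr : 0 ≤ r) (hs : 0 ≤ s)
    (hr2 : |r ^ 2 - 1| ≤ θ) (hs2 : 1 - θ ≤ s ^ 2) : 1 + r ^ 2 - 2 * (r * s) ≤ 3 * θ := by
  obtain ⟨hr₁, hr₂⟩ := abs_le.1 hr2
  have hrs : 1 - θ ≤ r * s := by
    rcases le_total θ 1 with hθ | hθ
    · rw [← sq_le_sq₀ (by linarith) (by positivity), mul_pow, sq (1 - θ)]
      exact mul_le_mul (by linarith) hs2 (by linarith) (sq_nonneg r)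
    · linarith [mul_nonneg hr hs]
  linarith

theorem initialization_distance_bound_general {n : ℕ}
    (z x0t : EuclideanSpace ℂ (Fin n)) (hz : ‖z‖ = 1) (hx0t : ‖x0t‖ = 1)
    (θ lam : ℝ)
    (hcorr : 1 - θ ≤ ‖∑ k, (starRingEnd ℂ) (x0t k) * z k‖^2)
    (hl : |lam^2 - 1| ≤ θ) :
    sInf {d : ℝ | ∃ φ ∈ Set.Ico (0:ℝ) (2*Real.pi),
        d = ‖z - Complex.exp (φ * Complex.I) • (lam • x0t)‖^2} ≤ 3*θ := by
  obtain ⟨φ, hφ, hdist⟩ := exists_phase_norm_sub_smul_sq_eq (lam • x0t) z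
  have hinner : inner ℂ (lam • x0t) z = lam * ∑ k, (starRingEnd ℂ) (x0t k) * z k := by
    rw [inner_smul_left_eq_smul, Complex.real_smul, PiLp.inner_apply]
    congr 1
    simp [mul_comm]
  have hbdd : BddBelow {d : ℝ | ∃ φ ∈ Set.Ico (0:ℝ) (2*Real.pi),
      d = ‖z - Complex.exp (φ * Complex.I) • (lam • x0t)‖^2} :=
    ⟨0, by rintro _ ⟨_, _, rfl⟩; positivity⟩
  refine (csInf_le hbdd ⟨φ, hφ, rfl⟩).trans ?_
  rw [hdist, hinner, norm_mul, norm_smul, hz, hx0t, Complex.norm_real, Real.norm_eq_abs, mul_one,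
    one_pow]
  exact one_add_sq_sub_two_mul_le_three_mul (abs_nonneg lam) (norm_nonneg _) (by rwa [sq_abs]) hcorr

/-- If `‖z‖ = 1`, `x̃₀` is a unit vector with `|x̃₀* z|² ≥ 1 − θ` and `|λ² − 1| ≤ θ`
with `0 < θ ≤ 1`, `λ > 0`, then `x₀ = λ x̃₀` satisfies
`dist(x₀, z)² = min_{φ ∈ [0,2π)} ‖z − e^{iφ}x₀‖² ≤ 3θ`. -/
theorem initialization_distance_bound {n : ℕ}
    (z x0t : EuclideanSpace ℂ (Fin n)) (hz : ‖z‖ = 1) (hx0t : ‖x0t‖ = 1)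
    (θ lam : ℝ) (hθ0 : 0 < θ) (hθ1 : θ ≤ 1) (hlam : 0 < lam)
    (hcorr : 1 - θ ≤ ‖∑ k, (starRingEnd ℂ) (x0t k) * z k‖^2)
    (hl : |lam^2 - 1| ≤ θ) :
    sInf {d : ℝ | ∃ φ ∈ Set.Ico (0:ℝ) (2*Real.pi),
        d = ‖z - Complex.exp (φ * Complex.I) • (lam • x0t)‖^2} ≤ 3*θ :=
  initialization_distance_bound_general z x0t hz hx0t θ lam hcorr hl
end

section
/- Fix x_k ∈ ℂⁿ and define, for x ∈ ℂⁿ, x^♯ = (x − x_k; conj(x) − conj(x_k)) ∈ ℂ^{2n}, and let A_k ∈ ℂ^{m×2n} be the matrix whose j-th row is (x_k* a_j a_j*, x_kᵀ conj(a_j) a_jᵀ) for vectors a_j ∈ ℂⁿ. Then A_k applied to the vector (x_k; −conj(x_k)) ∈ ℂ^{2n} is zero, and consequently, if x̂ minimizes ‖A_k x^♯ + F̃_k‖² over x ∈ ℂⁿ for any fixed F̃_k ∈ ℂ^m, then for every real c₀ the vector x̂ + i c₀ x_k is also a minimizer. -/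
open Matrix

/-- Non-uniqueness of the complex Gauss–Newton step: the matrix `A_k` annihilates
`(x_k; −conj x_k)`, and if `x̂` minimizes `‖A_k x^♯ + F̃_k‖²` then so does
`x̂ + i c₀ x_k` for every real `c₀`. -/
theorem gauss_newton_complex_step_nonunique {n m : ℕ}
    (xk : Fin n → ℂ) (a : Fin m → Fin n → ℂ)
    (Ak : Matrix (Fin m) (Fin n ⊕ Fin n) ℂ)
    (hAkL : ∀ j i, Ak j (Sum.inl i) =
      (∑ l, (starRingEnd ℂ) (xk l) * a j l) * (starRingEnd ℂ) (a j i))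
    (hAkR : ∀ j i, Ak j (Sum.inr i) =
      (∑ l, xk l * (starRingEnd ℂ) (a j l)) * a j i)
    (sharp : (Fin n → ℂ) → (Fin n ⊕ Fin n → ℂ))
    (hsharp : ∀ x, sharp x = Sum.elim (fun i => x i - xk i)
      (fun i => (starRingEnd ℂ) (x i) - (starRingEnd ℂ) (xk i))) :
    (Ak.mulVec (Sum.elim xk (fun i => -(starRingEnd ℂ) (xk i))) = 0) ∧
    ∀ (F : Fin m → ℂ) (xhat : Fin n → ℂ),
      (∀ x, ∑ j, Complex.normSq (Ak.mulVec (sharp xhat) j + F j) ≤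
            ∑ j, Complex.normSq (Ak.mulVec (sharp x) j + F j)) →
      ∀ (c₀ : ℝ) (x : Fin n → ℂ),
        ∑ j, Complex.normSq (Ak.mulVec (sharp (fun i => xhat i + Complex.I * (c₀ : ℂ) * xk i)) j + F j) ≤
        ∑ j, Complex.normSq (Ak.mulVec (sharp x) j + F j) := by
  set v : Fin n ⊕ Fin n → ℂ := Sum.elim xk (fun i => -(starRingEnd ℂ) (xk i)) with hv
  have h0 : Ak.mulVec v = 0 := by
    funext j
    simp only [mulVec, dotProduct, Fintype.sum_sum_type, hAkL, hAkR, hv, Sum.elim_inl,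
      Sum.elim_inr, mul_neg, Pi.zero_apply, mul_assoc]
    rw [Finset.sum_neg_distrib, ← Finset.mul_sum, ← Finset.mul_sum]
    rw [show (∑ i, (starRingEnd ℂ) (a j i) * xk i) = ∑ i, xk i * (starRingEnd ℂ) (a j i) from
      Finset.sum_congr rfl fun i _ => mul_comm _ _,
      show (∑ i, a j i * (starRingEnd ℂ) (xk i)) = ∑ i, (starRingEnd ℂ) (xk i) * a j i from
      Finset.sum_congr rfl fun i _ => mul_comm _ _]
    ring
  refine ⟨h0, fun F xhat hmin c₀ x => ?_⟩
  have hs : sharp (fun i => xhat i + Complex.I * (c₀ : ℂ) * xk i)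
      = sharp xhat + (Complex.I * (c₀ : ℂ)) • v := by
    funext p
    cases p with
    | inl i => simp [hsharp, hv]; ring
    | inr i => simp [hsharp, hv, Complex.conj_I]; ring
  have hm : Ak.mulVec (sharp (fun i => xhat i + Complex.I * (c₀ : ℂ) * xk i))
      = Ak.mulVec (sharp xhat) := by
    rw [hs, mulVec_add, mulVec_smul, h0, smul_zero, add_zero]
  rw [hm]
  exact hmin x
end

section
/- Let z ∈ ℝⁿ with ‖z‖ = 1 and let 0 < δ ≤ 1/93. Suppose a sequence (x_k) in ℝⁿ satisfies dist(x₀, z) ≤ √δ and dist(x_{k+1}, z) ≤ β · dist(x_k, z)² for all k, where β = 8(7 + 3δ/4)(1+√δ)/((8−δ)(1−√δ)²). Then for every T ≥ 0, dist(x_T, z) ≤ (β√δ)^{2^T}. -/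
/-- `dist(x, z) = min {‖x − z‖, ‖x + z‖}` for real signals. -/
noncomputable def distSign {n : ℕ} (x z : EuclideanSpace ℝ (Fin n)) : ℝ :=
  min ‖x - z‖ ‖x + z‖

/-- Iterating the quadratic recursion `dist(x_{k+1},z) ≤ β dist(x_k,z)²` from
`dist(x₀,z) ≤ √δ` gives `dist(x_T,z) ≤ (β√δ)^{2^T}`. -/
theorem resampled_gn_quadratic_convergence {n : ℕ}
    (z : EuclideanSpace ℝ (Fin n)) (hz : ‖z‖ = 1)
    (δ : ℝ) (hδ0 : 0 < δ) (hδ1 : δ ≤ 1/93)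
    (x : ℕ → EuclideanSpace ℝ (Fin n))
    (β : ℝ)
    (hβ : β = 8*(7 + 3*δ/4)*(1 + Real.sqrt δ)/((8 - δ)*(1 - Real.sqrt δ)^2))
    (h0 : distSign (x 0) z ≤ Real.sqrt δ)
    (hrec : ∀ k : ℕ, distSign (x (k+1)) z ≤ β * (distSign (x k) z)^2) :
    ∀ T : ℕ, distSign (x T) z ≤ (β * Real.sqrt δ)^(2^T) := by
  have hd : ∀ k, 0 ≤ distSign (x k) z := fun k =>
    le_min (norm_nonneg _) (norm_nonneg _)
  have hs0 : 0 ≤ Real.sqrt δ := Real.sqrt_nonneg _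
  have hs1 : Real.sqrt δ < 1 := by
    rw [show (1:ℝ) = Real.sqrt 1 by simp]
    exact Real.sqrt_lt_sqrt hδ0.le (by linarith)
  have hden : 0 < (8 - δ) * (1 - Real.sqrt δ)^2 :=
    mul_pos (by linarith) (pow_pos (by linarith) 2)
  have hβ1 : 1 ≤ β := by
    rw [hβ, le_div_iff₀ hden]
    nlinarith [hs0, hs1, Real.sq_sqrt hδ0.le]
  have key : ∀ T : ℕ, distSign (x T) z ≤ β^(2^T - 1) * Real.sqrt δ ^ (2^T) := by
    intro T
    induction T with
    | zero => simpa using h0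
    | succ T ih =>
      have h2 : (1:ℕ) ≤ 2^T := Nat.one_le_two_pow
      calc distSign (x (T+1)) z ≤ β * (distSign (x T) z)^2 := hrec T
        _ ≤ β * (β^(2^T - 1) * Real.sqrt δ ^ (2^T))^2 := by
            apply mul_le_mul_of_nonneg_left _ (by linarith)
            exact pow_le_pow_left₀ (hd T) ih 2
        _ = β^(1 + (2^T - 1)*2) * Real.sqrt δ ^ (2^T * 2) := by
            rw [mul_pow, ← pow_mul, ← pow_mul, pow_add, pow_one]; ring
        _ = β^(2^(T+1) - 1) * Real.sqrt δ ^ (2^(T+1)) := by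
            have h2 : (1:ℕ) ≤ 2^T := Nat.one_le_two_pow
            rw [pow_succ, show 2^T*2-1 = 1+(2^T-1)*2 from by omega]
  intro T
  calc distSign (x T) z ≤ β^(2^T - 1) * Real.sqrt δ ^ (2^T) := key T
    _ ≤ β^(2^T) * Real.sqrt δ ^ (2^T) := by
        apply mul_le_mul_of_nonneg_right (pow_le_pow_right₀ hβ1 (Nat.sub_le _ _))
        positivity
    _ = (β * Real.sqrt δ)^(2^T) := (mul_pow _ _ _).symm
end
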